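/- arXiv:1107.0447 — 11 statements merged into one kernel-verified Lean document; each statement's English description precedes it below -/
import Mathlib

section
/- Let n be a positive integer and p a prime with v_p(n) = 1. Then Z/nZ has a unique nonzero p-ideal. -/
def IsPRing (p : ℕ) (R : Type*) [CommRing R] : Prop :=
  ∀ x : R, x ^ p = x ∧ p • x = 0

def IsPIdeal (p : ℕ) {R : Type*} [CommRing R] (I : Ideal R) : Prop :=
  ∀ x ∈ I, x ^ p = x ∧ p • x = 0

theorem stmt_2 (n : ℕ) (hn : 0 < n) (p : ℕ) (hp : p.Prime)
    (hv : n.factorization p = 1) :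
    ∃! I : Ideal (ZMod n), I ≠ ⊥ ∧ IsPIdeal p I := by
  haveI : Fact p.Prime := ⟨hp⟩
  haveI : NeZero n := ⟨hn.ne'⟩
  have hpn : p ∣ n := Nat.dvd_of_factorization_pos (by rw [hv]; exact one_ne_zero)
  obtain ⟨m, hm⟩ := hpn
  have hm0 : 0 < m := by
    rcases Nat.eq_zero_or_pos m with h | h
    · subst h; simp at hm; omega
    · exact h
  have hpm : ¬ p ∣ m := by
    intro h
    have h2 : p ^ 2 ∣ n := by rw [hm, pow_two]; exact mul_dvd_mul_left p h
    have := (Nat.Prime.pow_dvd_iff_le_factorization hp hn.ne').mp h2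
    rw [hv] at this; omega
  have hcop : Nat.Coprime p m := (Nat.Prime.coprime_iff_not_dvd hp).mpr hpm
  have hmn : m < n := by
    have h2 : 2 ≤ p := hp.two_le
    have : 2 * m ≤ p * m := Nat.mul_le_mul_right m h2
    omega
  -- key power lemma
  have hpow : ∀ k : ℕ, ((k * m : ℕ) : ZMod n) ^ p = ((k * m : ℕ) : ZMod n) := by
    intro k
    have h1 : (k * m) ^ p ≡ k * m [MOD p] := by
      have : (((k * m) ^ p : ℕ) : ZMod p) = ((k * m : ℕ) : ZMod p) := by
        push_cast
        exact ZMod.pow_card _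
      exact (ZMod.natCast_eq_natCast_iff _ _ _).mp this
    have h2 : (k * m) ^ p ≡ k * m [MOD m] := by
      have d1 : m ∣ (k * m) ^ p := dvd_pow (dvd_mul_left m k) hp.pos.ne'
      have d2 : m ∣ k * m := dvd_mul_left m k
      exact (Nat.modEq_zero_iff_dvd.mpr d1).trans (Nat.modEq_zero_iff_dvd.mpr d2).symm
    have h3 : (k * m) ^ p ≡ k * m [MOD n] := by
      rw [hm]; exact (Nat.modEq_and_modEq_iff_modEq_mul hcop).mp ⟨h1, h2⟩
    have := (ZMod.natCast_eq_natCast_iff _ _ n).mpr h3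
    push_cast at this ⊢
    exact this
  have hnsm : ∀ x : ZMod n, p • ((m : ZMod n) * x) = 0 := by
    intro x
    have h0 : (p : ZMod n) * (m : ZMod n) = 0 := by
      rw [← Nat.cast_mul, ← hm, ZMod.natCast_self]
    rw [nsmul_eq_mul, ← mul_assoc, h0, zero_mul]
  set I0 : Ideal (ZMod n) := Ideal.span {(m : ZMod n)} with hI0
  have hPI : IsPIdeal p I0 := by
    intro x hx
    obtain ⟨c, hc⟩ := Ideal.mem_span_singleton'.mp hx
    constructor
    · have hx' : x = ((c.val * m : ℕ) : ZMod n) := by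
        push_cast
        rw [ZMod.natCast_zmod_val, hc]
      rw [hx']; exact hpow c.val
    · rw [← hc, mul_comm]; exact hnsm c
  have hI0ne : I0 ≠ ⊥ := by
    intro h
    have : (m : ZMod n) ∈ I0 := Ideal.mem_span_singleton_self _
    rw [h, Ideal.mem_bot, ZMod.natCast_eq_zero_iff] at this
    exact absurd (Nat.le_of_dvd hm0 this) (by omega)
  -- any p-ideal is contained in I0
  have hsub : ∀ J : Ideal (ZMod n), IsPIdeal p J →
      ∀ x ∈ J, ∃ t : ℕ, x.val = m * t := by
    intro J hJ x hx
    have hpx := (hJ x hx).2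
    have : ((p * x.val : ℕ) : ZMod n) = 0 := by
      push_cast
      rw [ZMod.natCast_zmod_val]
      rw [nsmul_eq_mul] at hpx
      exact hpx
    rw [ZMod.natCast_eq_zero_iff] at this
    have hmdvdn : m ∣ n := ⟨p, by rw [hm, Nat.mul_comm]⟩
    have hmd : m ∣ x.val :=
      (Nat.Coprime.dvd_of_dvd_mul_left hcop.symm (hmdvdn.trans this))
    exact hmd
  refine ⟨I0, ⟨hI0ne, hPI⟩, ?_⟩
  rintro J ⟨hJne, hJP⟩
  refine le_antisymm ?_ ?_
  · intro x hx
    obtain ⟨t, ht⟩ := hsub J hJP x hx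
    refine Ideal.mem_span_singleton'.mpr ⟨(t : ZMod n), ?_⟩
    rw [← Nat.cast_mul]
    conv_rhs => rw [← ZMod.natCast_zmod_val x]
    rw [ht, mul_comm]
  · obtain ⟨x, hxJ, hx0⟩ := Submodule.exists_mem_ne_zero_of_ne_bot hJne
    obtain ⟨t, ht⟩ := hsub J hJP x hxJ
    have hxval : x.val < n := ZMod.val_lt x
    have hxv0 : x.val ≠ 0 := fun h => hx0 ((ZMod.val_eq_zero x).mp h)
    have hpt : ¬ p ∣ t := by
      rintro ⟨s, rfl⟩
      have : x.val = n * s := by rw [ht, hm]; ring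
      rcases Nat.eq_zero_or_pos s with h | h
      · subst h; rw [Nat.mul_zero] at this; exact hxv0 this
      · have : n ≤ x.val := this ▸ Nat.le_mul_of_pos_right n h
        omega
    have hcopt : Nat.Coprime t p := ((Nat.Prime.coprime_iff_not_dvd hp).mpr hpt).symm
    have hφ : 1 ≤ p.totient := Nat.totient_pos.mpr hp.pos
    set u : ℕ := t ^ (p.totient - 1) with hu
    have hut : u * t ≡ 1 [MOD p] := by
      have : u * t = t ^ p.totient := by
        rw [hu, ← pow_succ, Nat.sub_add_cancel hφ]
      rw [this]
      exact Nat.ModEq.pow_totient hcopt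
    have hmod : m * (u * t) ≡ m * 1 [MOD m * p] := Nat.ModEq.mul_left' m hut
    have hcast : ((m * (u * t) : ℕ) : ZMod n) = ((m * 1 : ℕ) : ZMod n) := by
      rw [ZMod.natCast_eq_natCast_iff]
      have hnmp : n = m * p := by rw [hm, Nat.mul_comm]
      rw [hnmp]
      exact hmod
    have hmem : (m : ZMod n) ∈ J := by
      have hxe : ((m * t : ℕ) : ZMod n) = x := by rw [← ht, ZMod.natCast_zmod_val]
      have : (m : ZMod n) = (u : ZMod n) * x := by
        rw [← hxe, ← Nat.cast_mul]
        have : m * (u * t) = u * (m * t) := by ring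
        rw [this] at hcast
        rw [hcast]
        push_cast
        ring
      rw [this]
      exact Ideal.mul_mem_left J _ hxJ
    rw [hI0]
    rw [Ideal.span_le, Set.singleton_subset_iff]
    exact hmem
end

section
/- Let n be a positive integer and p a prime with v_p(n) ≥ 2. Then the zero ideal is the unique p-ideal of Z/nZ. -/
theorem stmt_3 (n : ℕ) (hn : 0 < n) (p : ℕ) (hp : p.Prime)
    (hv : 2 ≤ n.factorization p) :
    ∀ I : Ideal (ZMod n), IsPIdeal p I ↔ I = ⊥ := by
  haveI : NeZero n := ⟨hn.ne'⟩
  intro I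
  constructor
  · intro hI
    rw [eq_bot_iff]
    intro x hx
    obtain ⟨h1, h2⟩ := hI x hx
    simp only [Ideal.mem_bot]
    set a : ℕ := x.val with ha
    have hxa : (a : ZMod n) = x := by rw [ha, ZMod.natCast_val, ZMod.cast_id]
    by_cases ha0 : a = 0
    · rw [← hxa, ha0]; simp
    -- n ∣ p * a
    have hdvd1 : n ∣ p * a := by
      have : ((p * a : ℕ) : ZMod n) = 0 := by
        push_cast
        rw [hxa]
        rw [nsmul_eq_mul] at h2
        simpa using h2
      exact (ZMod.natCast_eq_zero_iff _ _).mp this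
    set k : ℕ := n.factorization p with hk
    -- p ∣ a
    have hpa : p ∣ a := by
      have h1k : k ≤ (p * a).factorization p :=
        (Nat.Prime.pow_dvd_iff_le_factorization hp
          (mul_ne_zero hp.ne_zero ha0)).mp
          (dvd_trans (Nat.ordProj_dvd n p) hdvd1)
      rw [Nat.factorization_mul hp.ne_zero ha0] at h1k
      simp only [Finsupp.add_apply, hp.factorization_self] at h1k
      have hh : p ^ 1 ∣ a := (Nat.Prime.pow_dvd_iff_le_factorization hp ha0).mpr (by omega)
      simpa using hh
    have ha2 : 2 ≤ a := le_trans hp.two_le (Nat.le_of_dvd (Nat.pos_of_ne_zero ha0) hpa)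
    -- n ∣ a^p - a
    have hdvd2 : n ∣ a ^ p - a := by
      have hle : a ≤ a ^ p := Nat.le_self_pow hp.ne_zero a
      have : ((a ^ p - a : ℕ) : ZMod n) = 0 := by
        rw [Nat.cast_sub hle]
        push_cast
        rw [hxa, h1]
        ring
      exact (ZMod.natCast_eq_zero_iff _ _).mp this
    -- a^p - a = a * (a^(p-1) - 1)
    have hfact : a ^ p - a = a * (a ^ (p - 1) - 1) := by
      have hap : a * a ^ (p - 1) = a ^ p := by
        have hp1 := hp.two_le
        rw [← pow_succ']
        congr 1
        omega
      rw [Nat.mul_sub, mul_one, hap]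
    -- p ∤ a^(p-1) - 1
    have hnd : ¬ p ∣ (a ^ (p - 1) - 1) := by
      intro hcon
      have hpow : p ∣ a ^ (p - 1) := dvd_pow hpa (by have := hp.two_le; omega)
      have h1le : 1 ≤ a ^ (p - 1) := Nat.one_le_pow _ _ (by omega)
      have hd : p ∣ a ^ (p - 1) - (a ^ (p - 1) - 1) := Nat.dvd_sub hpow hcon
      rw [Nat.sub_sub_self h1le] at hd
      exact hp.one_lt.ne' (Nat.dvd_one.mp hd)
    -- p^k ∣ a
    have hpka : p ^ k ∣ a := by
      have hlt : a < a ^ p := by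
        calc a < a * a := by nlinarith
        _ = a ^ 2 := (pow_two a).symm
        _ ≤ a ^ p := Nat.pow_le_pow_right (by omega) hp.two_le
      have hne : a ^ p - a ≠ 0 := by omega
      have h2k : k ≤ (a ^ p - a).factorization p :=
        (Nat.Prime.pow_dvd_iff_le_factorization hp hne).mp
          (dvd_trans (Nat.ordProj_dvd n p) hdvd2)
      have hne2 : a ^ (p - 1) - 1 ≠ 0 := by
        intro hcon
        rw [hfact, hcon, mul_zero] at hne
        exact hne rfl
      rw [hfact, Nat.factorization_mul ha0 hne2] at h2k
      have hz : (a ^ (p - 1) - 1).factorization p = 0 :=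
        Nat.factorization_eq_zero_of_not_dvd hnd
      simp only [Finsupp.add_apply, hz, add_zero] at h2k
      exact (Nat.Prime.pow_dvd_iff_le_factorization hp ha0).mpr h2k
    -- conclude n ∣ a
    have hna : n ∣ a := by
      have hcp : Nat.Coprime p (n / p ^ k) := Nat.coprime_ordCompl hp hn.ne'
      have hcop : Nat.Coprime (p ^ k) (n / p ^ k) := Nat.Coprime.pow_left k hcp
      have hm : (n / p ^ k) ∣ a := by
        have hmd : (n / p ^ k) ∣ p * a := dvd_trans (Nat.ordCompl_dvd n p) hdvd1
        exact (Nat.Coprime.dvd_of_dvd_mul_left hcp.symm hmd)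
      have := Nat.Coprime.mul_dvd_of_dvd_of_dvd hcop hpka hm
      rwa [Nat.ordProj_mul_ordCompl_eq_self n p] at this
    rw [← hxa]
    exact (ZMod.natCast_eq_zero_iff _ _).mpr hna
  · rintro rfl
    intro x hx
    simp only [Ideal.mem_bot] at hx
    subst hx
    simp [zero_pow hp.ne_zero]
end

section
/- Let R be a commutative p-ring and f(x) ∈ R[x]. Then the quotient ring R[x]/(f(x)) is a p-ring if and only if f(x) divides x^p − x in R[x]. -/
theorem key_dvd (p : ℕ) (hp : p.Prime) (R : Type*) [CommRing R]
    (hR : IsPRing p R) (g : Polynomial R) :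
    (Polynomial.X ^ p - Polynomial.X : Polynomial R) ∣ g ^ p - g := by
  cases subsingleton_or_nontrivial R with
  | inl h => exact ⟨0, Subsingleton.elim _ _⟩
  | inr h =>
    have hp0 : (p : R) = 0 := by
      have := (hR 1).2
      simpa [nsmul_eq_mul] using this
    haveI : CharP R p := (CharP.charP_iff_prime_eq_zero hp).2 hp0
    haveI : Fact p.Prime := ⟨hp⟩
    induction g using Polynomial.induction_on with
    | C a =>
      have : (Polynomial.C a) ^ p - Polynomial.C a = 0 := by
        rw [← Polynomial.C_pow, (hR a).1, sub_self]
      rw [this]; exact dvd_zero _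
    | add f g hf hg =>
      have : (f + g) ^ p - (f + g) = (f ^ p - f) + (g ^ p - g) := by
        rw [add_pow_char]; ring
      rw [this]; exact dvd_add hf hg
    | monomial n a _ =>
      have h1 : (Polynomial.C a * Polynomial.X ^ (n + 1)) ^ p -
          Polynomial.C a * Polynomial.X ^ (n + 1) =
          Polynomial.C a * ((Polynomial.X ^ p) ^ (n + 1) - Polynomial.X ^ (n + 1)) := by
        rw [mul_pow, ← Polynomial.C_pow, (hR a).1, ← pow_mul, ← pow_mul, mul_comm p (n+1),
          mul_sub, pow_mul]
      rw [h1]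
      exact Dvd.dvd.mul_left (sub_dvd_pow_sub_pow _ _ _) _

theorem stmt_6 (p : ℕ) (hp : p.Prime) (R : Type*) [CommRing R]
    (hR : IsPRing p R) (f : Polynomial R) :
    IsPRing p (Polynomial R ⧸ Ideal.span {f}) ↔
      f ∣ (Polynomial.X ^ p - Polynomial.X) := by
  constructor
  · intro h
    have := (h (Ideal.Quotient.mk _ Polynomial.X)).1
    rw [← map_pow, ← sub_eq_zero, ← map_sub, Ideal.Quotient.eq_zero_iff_mem,
      Ideal.mem_span_singleton] at this
    exact this
  · intro hdvd x
    obtain ⟨g, rfl⟩ := Ideal.Quotient.mk_surjective x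
    constructor
    · rw [← map_pow, ← sub_eq_zero, ← map_sub, Ideal.Quotient.eq_zero_iff_mem,
        Ideal.mem_span_singleton]
      exact dvd_trans hdvd (key_dvd p hp R hR g)
    · rw [← map_nsmul, ← map_zero (Ideal.Quotient.mk (Ideal.span {f}))]
      congr 1
      ext n
      have := (hR (g.coeff n)).2
      simp only [Polynomial.coeff_smul, Polynomial.coeff_zero, smul_eq_mul, nsmul_eq_mul] at this ⊢
      simpa using this
end

section
/- Let p be a prime, f(x) an irreducible polynomial over F_p, and k a positive integer. If F_p[x]/(f(x)^k) contains a nonzero p-ideal, then F_p[x]/(f(x)^k) is a p-ring. -/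
set_option synthInstance.maxHeartbeats 1000000
set_option maxHeartbeats 1000000

theorem stmt_7 (p : ℕ) [Fact p.Prime] (f : Polynomial (ZMod p))
    (hf : Irreducible f) (k : ℕ) (hk : 0 < k)
    (h : ∃ I : Ideal (Polynomial (ZMod p) ⧸ Ideal.span {f ^ k}),
      I ≠ ⊥ ∧ IsPIdeal p I) :
    IsPRing p (Polynomial (ZMod p) ⧸ Ideal.span {f ^ k}) := by
  obtain ⟨I, hIbot, hI⟩ := h
  have hp := (Fact.out : p.Prime)
  have hp2 : 2 ≤ p := hp.two_le
  -- pick a nonzero element of I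
  obtain ⟨x, hxI, hx0⟩ := Submodule.exists_mem_ne_zero_of_ne_bot hIbot
  -- e = x^(p-1) is an idempotent in I
  set e := x ^ (p - 1) with he
  have heI : e ∈ I := Ideal.pow_mem_of_mem I hxI _ (by omega : 0 < p - 1)
  have hxp : x ^ p = x := (hI x hxI).1
  have hee : e * e = e := by
    have : x ^ (p - 1) * x ^ (p - 1) = x ^ (p - 2) * x ^ p := by
      rw [← pow_add, ← pow_add]; congr 1; omega
    rw [he, this, hxp, ← pow_succ]
    congr 1; omega
  -- idempotents in the quotient are 0 or 1
  have hfk : Prime f := hf.prime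
  obtain ⟨g, hge⟩ := Ideal.Quotient.mk_surjective e
  have hdvd : f ^ k ∣ g * (g - 1) := by
    rw [← Ideal.mem_span_singleton]
    have : (Ideal.Quotient.mk (Ideal.span {f ^ k})) (g * (g - 1)) = 0 := by
      rw [map_mul, map_sub, map_one, hge, mul_sub, mul_one, hee, sub_self]
    rwa [Ideal.Quotient.eq_zero_iff_mem] at this
  have he01 : f ^ k ∣ g ∨ f ^ k ∣ (g - 1) := by
    rcases hfk.dvd_or_dvd (dvd_trans (dvd_pow_self f hk.ne') hdvd) with hg | hg1
    · left
      refine hfk.pow_dvd_of_dvd_mul_right k ?_ hdvd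
      intro hc
      exact hfk.not_dvd_one (by simpa using dvd_sub hg hc)
    · right
      refine hfk.pow_dvd_of_dvd_mul_left k ?_ hdvd
      intro hc
      exact hfk.not_dvd_one (by simpa using dvd_sub hc hg1)
  rcases he01 with hg | hg1
  · -- e = 0, contradicting x ≠ 0
    exfalso
    apply hx0
    have he0 : (Ideal.Quotient.mk (Ideal.span {f ^ k})) g = 0 := by
      rw [Ideal.Quotient.eq_zero_iff_mem, Ideal.mem_span_singleton]; exact hg
    calc x = x ^ p := hxp.symm
      _ = x * x ^ (p - 1) := by rw [← pow_succ']; congr 1; omega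
      _ = 0 := by rw [← he, ← hge, he0, mul_zero]
  · -- e = 1, so I = ⊤
    have he1 : (Ideal.Quotient.mk (Ideal.span {f ^ k})) g = 1 := by
      have : (Ideal.Quotient.mk (Ideal.span {f ^ k})) (g - 1) = 0 := by
        rw [Ideal.Quotient.eq_zero_iff_mem, Ideal.mem_span_singleton]; exact hg1
      rwa [map_sub, map_one, sub_eq_zero] at this
    have hItop : I = ⊤ := (Ideal.eq_top_iff_one I).mpr (by rw [← he1, hge]; exact heI)
    intro y
    exact hI y (hItop ▸ Submodule.mem_top)
end

section
/- Let p be a prime and f(x) a nonconstant polynomial over F_p. Then F_p[x]/(f(x)) contains a nonzero p-ideal if and only if f(x) has at least one simple root in F_p. -/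
set_option synthInstance.maxHeartbeats 1000000
set_option maxHeartbeats 1000000

open Polynomial

lemma xps_splits (p : ℕ) [Fact p.Prime] : Splits (X ^ p - X : (ZMod p)[X]) := by
  rw [splits_iff_card_roots]
  have h := FiniteField.roots_X_pow_card_sub_X (ZMod p)
  rw [ZMod.card] at h
  rw [h, FiniteField.X_pow_card_sub_X_natDegree_eq _ (Fact.out (p := p.Prime)).one_lt]
  simp [Finset.card_univ, ZMod.card]

lemma key (p : ℕ) [Fact p.Prime] (f : Polynomial (ZMod p)) (hf : 0 < f.degree)
    (E : Polynomial (ZMod p)) (hE1 : ¬ f ∣ E) (hE2 : f ∣ E ^ 2 - E)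
    (hall : ∀ r : Polynomial (ZMod p), f ∣ (r ^ p - r) * E) :
    ∃ a : ZMod p, f.eval a = 0 ∧ f.derivative.eval a ≠ 0 := by
  classical
  have hp2 : 1 < p := (Fact.out (p := p.Prime)).one_lt
  have hf0 : f ≠ 0 := fun h => by simp [h] at hf
  set T := EuclideanDomain.gcd f (E - 1) with hT
  have hTf : T ∣ f := EuclideanDomain.gcd_dvd_left _ _
  have hTE1 : T ∣ E - 1 := EuclideanDomain.gcd_dvd_right _ _
  -- T is not a unit
  have hTnu : ¬ IsUnit T := by
    intro hu
    have hcop : IsCoprime f (E - 1) := EuclideanDomain.gcd_isUnit_iff.1 hu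
    have : f ∣ E * (E - 1) := by
      have : E * (E - 1) = E ^ 2 - E := by ring
      rw [this]; exact hE2
    exact hE1 (hcop.dvd_of_dvd_mul_right this)
  have hT0 : T ≠ 0 := fun h => hf0 (EuclideanDomain.gcd_eq_zero_iff.1 h).1
  -- T coprime to E
  have hcopTE : IsCoprime T E :=
    IsCoprime.of_isCoprime_of_dvd_left ⟨-1, 1, by ring⟩ hTE1
  -- T divides X^p - X
  have hTx : T ∣ (X ^ p - X : (ZMod p)[X]) :=
    hcopTE.dvd_of_dvd_mul_right (dvd_trans hTf (hall X))
  -- T splits, get a root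
  have hTsplit : Splits T :=
    Splits.of_dvd (xps_splits p) (FiniteField.X_pow_card_sub_X_ne_zero _ hp2) hTx
  have hTdeg : T.degree ≠ 0 := fun h => hTnu (isUnit_iff_degree_eq_zero.2 h)
  obtain ⟨a, ha'⟩ := hTsplit.exists_eval_eq_zero hTdeg
  have ha : T.eval a = 0 := by simpa using ha'
  have hXa : (X - C a) ∣ T := dvd_iff_isRoot.2 ha
  refine ⟨a, ?_, ?_⟩
  · exact eval_eq_zero_of_dvd_of_eval_eq_zero hTf ha
  · intro hder
    -- E(a) = 1
    have hEa : E.eval a = 1 := by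
      have : (E - 1).eval a = 0 :=
        eval_eq_zero_of_dvd_of_eval_eq_zero (hXa.trans hTE1) (show eval a (X - C a) = 0 by simp)
      have h2 : E.eval a - 1 = 0 := by simpa using this
      linear_combination h2
    -- (X - C a)^2 ∣ f
    have hfa : f.eval a = 0 := eval_eq_zero_of_dvd_of_eval_eq_zero hTf ha
    obtain ⟨g, hg⟩ := dvd_iff_isRoot.2 hfa
    have hga : g.eval a = 0 := by
      have : f.derivative = g + (X - C a) * g.derivative := by
        rw [hg, derivative_mul, derivative_sub, derivative_X, derivative_C]; ring
      have h2 := congrArg (eval a) this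
      simpa [hder] using h2.symm
    obtain ⟨k, hk⟩ := dvd_iff_isRoot.2 hga
    have hsq : (X - C a) ^ 2 ∣ f := ⟨k, by rw [hg, hk]; ring⟩
    -- coprime to E, so (X - C a)^2 ∣ X^p - X
    have hnd : ¬ (X - C a) ∣ E := by
      intro h
      have := eval_eq_zero_of_dvd_of_eval_eq_zero h (show eval a (X - C a) = 0 by simp)
      rw [hEa] at this; exact one_ne_zero this
    have hcop2 : IsCoprime ((X - C a) ^ 2) E :=
      (((irreducible_X_sub_C a).coprime_iff_not_dvd).2 hnd).pow_left
    have hsqx : (X - C a) ^ 2 ∣ (X ^ p - X : (ZMod p)[X]) :=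
      hcop2.dvd_of_dvd_mul_right (hsq.trans (hall X))
    -- but derivative of X^p - X at a is -1
    obtain ⟨m, hm⟩ := hsqx
    have hev : (derivative (X ^ p - X : (ZMod p)[X])).eval a = 0 := by
      rw [hm, derivative_mul]
      simp [derivative_pow]
    have hd1 : derivative (X ^ p - X : (ZMod p)[X]) = -1 := by
      rw [derivative_sub, derivative_X_pow, derivative_X]
      simp [ZMod.natCast_self]
    rw [hd1] at hev
    simp at hev

theorem stmt_9 (p : ℕ) [Fact p.Prime] (f : Polynomial (ZMod p))
    (hf : 0 < f.degree) :
    (∃ I : Ideal (Polynomial (ZMod p) ⧸ Ideal.span {f}), I ≠ ⊥ ∧ IsPIdeal p I) ↔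
      ∃ a : ZMod p, f.eval a = 0 ∧ f.derivative.eval a ≠ 0 := by
  classical
  have hp2 : 1 < p := (Fact.out (p := p.Prime)).one_lt
  set Q := Polynomial (ZMod p) ⧸ Ideal.span {f} with hQ
  set mk : Polynomial (ZMod p) →+* Q := Ideal.Quotient.mk (Ideal.span {f}) with hmk
  have hdvd_iff : ∀ g : Polynomial (ZMod p), mk g = 0 ↔ f ∣ g := by
    intro g
    rw [hmk, Ideal.Quotient.eq_zero_iff_mem, Ideal.mem_span_singleton]
  constructor
  · rintro ⟨I, hne, hpi⟩
    obtain ⟨u, hu, hu0⟩ := Submodule.exists_mem_ne_zero_of_ne_bot hne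
    have hup : u ^ p = u := (hpi u hu).1
    set e : Q := u ^ (p - 1) with he
    have heI : e ∈ I := I.pow_mem_of_mem hu (p - 1) (by omega)
    have hep : e ^ p = e := (hpi e heI).1
    have heu : e * u = u := by
      rw [he, ← pow_succ]
      have : p - 1 + 1 = p := by omega
      rw [this, hup]
    have he0 : e ≠ 0 := fun h => hu0 (by rw [← heu, h, zero_mul])
    have he2 : e ^ 2 = e := by
      rw [he, ← pow_mul]
      have h1 : (p - 1) * 2 = p + (p - 2) := by omega
      have h2 : p - 2 + 1 = p - 1 := by omega
      rw [h1, pow_add, hup, ← pow_succ', h2]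
    have hallq : ∀ r : Q, (r ^ p - r) * e = 0 := by
      intro r
      have hre : r * e ∈ I := I.mul_mem_left r heI
      have := (hpi _ hre).1
      rw [mul_pow, hep] at this
      rw [sub_mul, this, sub_self]
    obtain ⟨E, hE⟩ := Ideal.Quotient.mk_surjective (I := Ideal.span {f}) e
    have hE1 : ¬ f ∣ E := fun h => he0 (by rw [← hE]; exact (hdvd_iff E).2 h)
    have hE2 : f ∣ E ^ 2 - E := by
      rw [← hdvd_iff, map_sub, map_pow]
      show (mk E) ^ 2 - mk E = 0
      rw [hE, he2, sub_self]
    have hall : ∀ r : Polynomial (ZMod p), f ∣ (r ^ p - r) * E := by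
      intro r
      rw [← hdvd_iff, map_mul, map_sub, map_pow]
      show ((mk r) ^ p - mk r) * mk E = 0
      rw [hE]
      exact hallq (mk r)
    exact key p f hf E hE1 hE2 hall
  · rintro ⟨a, hfa, hda⟩
    obtain ⟨g, hg⟩ := dvd_iff_isRoot.2 hfa
    have hga : g.eval a ≠ 0 := by
      intro h0
      apply hda
      have : f.derivative = g + (X - C a) * g.derivative := by
        rw [hg, derivative_mul, derivative_sub, derivative_X, derivative_C]; ring
      rw [this]
      simp [h0]
    set E : Polynomial (ZMod p) := C (g.eval a)⁻¹ * g with hEdef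
    have hgE : g ∣ E := ⟨C (g.eval a)⁻¹, mul_comm _ _⟩
    have hEa : E.eval a = 1 := by
      rw [hEdef, eval_mul, eval_C, inv_mul_cancel₀ hga]
    have hXaE1 : (X - C a) ∣ E - 1 := by
      rw [dvd_iff_isRoot]
      simp [IsRoot, hEa]
    have hE2 : f ∣ E ^ 2 - E := by
      have : E ^ 2 - E = (E - 1) * E := by ring
      rw [this, hg]
      exact mul_dvd_mul hXaE1 hgE
    have hE1 : ¬ f ∣ E := by
      intro h
      have : E.eval a = 0 :=
        eval_eq_zero_of_dvd_of_eval_eq_zero h hfa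
      rw [hEa] at this
      exact one_ne_zero this
    have hall : ∀ r : Polynomial (ZMod p), f ∣ (r ^ p - r) * E := by
      intro r
      rw [hg]
      refine mul_dvd_mul ?_ hgE
      rw [dvd_iff_isRoot]
      simp [IsRoot, ZMod.pow_card]
    have hpow : ∀ n : ℕ, 1 ≤ n → f ∣ E ^ n - E := by
      intro n hn
      induction n with
      | zero => omega
      | succ m ih =>
        rcases Nat.eq_or_lt_of_le hn with h1 | h1
        · simp [← h1]
        · have hm : 1 ≤ m := by omega
          have : E ^ (m + 1) - E = E * (E ^ m - E) + (E ^ 2 - E) := by ring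
          rw [this]
          exact dvd_add ((ih hm).mul_left E) hE2
    refine ⟨Ideal.span {mk E}, ?_, ?_⟩
    · rw [Ne, Ideal.span_singleton_eq_bot]
      intro h
      exact hE1 ((hdvd_iff E).1 h)
    · intro x hx
      obtain ⟨y, hy⟩ := Ideal.mem_span_singleton.1 hx
      obtain ⟨r, hr⟩ := Ideal.Quotient.mk_surjective (I := Ideal.span {f}) y
      have hx' : x = mk (E * r) := by rw [map_mul, hr, hy]
      constructor
      · rw [hx', ← map_pow, Ideal.Quotient.mk_eq_mk_iff_sub_mem, Ideal.mem_span_singleton]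
        have heq : (E * r) ^ p - E * r = r ^ p * (E ^ p - E) + (r ^ p - r) * E := by ring
        rw [heq]
        exact dvd_add ((hpow p (by omega)).mul_left _) (hall r)
      · have hp0 : ((p : ℕ) : Polynomial (ZMod p)) = 0 := by
          rw [← map_natCast (C : ZMod p →+* Polynomial (ZMod p)) p, ZMod.natCast_self, map_zero]
        have : ((p : ℕ) : Q) = 0 := by
          rw [← map_natCast mk p, hp0, map_zero]
        rw [nsmul_eq_mul, this, zero_mul]
end

section
/- Let R be a finite commutative ring and p a prime. Then R is a p-ring with exactly n maximal ideals if and only if R is isomorphic as a ring to (F_p)^n. -/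
open Polynomial in
lemma field_equiv_zmod {p : ℕ} (hp : p.Prime) (F : Type*) [Field F] [Finite F]
    (h1 : ∀ x : F, x ^ p = x) (h2 : ((p : ℕ) : F) = 0) : Nonempty (F ≃+* ZMod p) := by
  have : Fact p.Prime := ⟨hp⟩
  haveI hc : CharP F p := by
    have hd : ringChar F ∣ p := ringChar.dvd h2
    rcases hp.eq_one_or_self_of_dvd _ hd with h | h
    · exact absurd h (CharP.ringChar_ne_one)
    · rw [← h]; exact ringChar.charP F
  cases nonempty_fintype F
  classical
  have hle : Fintype.card F ≤ p := by
    set q : F[X] := X ^ p - X with hq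
    have hq0 : q ≠ 0 := by
      intro h0
      have h1' : q.coeff 1 = -1 := by
        simp only [hq, coeff_sub, coeff_X_pow, coeff_X_one, if_neg hp.one_lt.ne]
        simp
      rw [h0] at h1'
      simp at h1'
    have hsub : Finset.univ ⊆ q.roots.toFinset := by
      intro x _
      simp only [Multiset.mem_toFinset, mem_roots hq0, IsRoot, hq]
      simp [h1 x, sub_eq_zero]
      exact fun h => hq0 (by rw [hq, h, sub_self])
    calc Fintype.card F = Finset.univ.card := rfl
      _ ≤ q.roots.toFinset.card := Finset.card_le_card hsub
      _ ≤ Multiset.card q.roots := q.roots.toFinset_card_le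
      _ ≤ q.natDegree := q.card_roots'
      _ ≤ p := by
          refine le_trans (natDegree_sub_le _ _) ?_
          simp [natDegree_X_pow, hp.one_lt.le]
  have hge : p ≤ Fintype.card F := by
    have hinj := (ZMod.castHom (dvd_refl p) F).injective
    calc p = Fintype.card (ZMod p) := (ZMod.card p).symm
      _ ≤ Fintype.card F := Fintype.card_le_of_injective _ hinj
  exact ⟨(ZMod.ringEquivOfPrime F hp (le_antisymm hle hge)).symm⟩

lemma pring_equiv {p : ℕ} (hp : p.Prime) (R : Type*) [CommRing R] [Finite R]
    (h : IsPRing p R) :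
    Nonempty (R ≃+* (Fin (Nat.card {I : Ideal R // I.IsMaximal}) → ZMod p)) := by
  have : Fact p.Prime := ⟨hp⟩
  haveI hred : IsReduced R := by
    refine ⟨fun x hx => ?_⟩
    obtain ⟨k, hk⟩ := hx
    have hpk : ∀ m : ℕ, x ^ p ^ m = x := by
      intro m
      induction m with
      | zero => simp
      | succ m ih => rw [pow_succ, pow_mul, ih, (h x).1]
    have hk' : k ≤ p ^ k := (Nat.lt_pow_self (n := k) hp.one_lt).le
    calc x = x ^ p ^ k := (hpk k).symm
      _ = x ^ k * x ^ (p ^ k - k) := by rw [← pow_add, Nat.add_sub_cancel' hk']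
      _ = 0 := by rw [hk, zero_mul]
  haveI hart : IsArtinianRing R := inferInstance
  haveI := (IsArtinianRing.setOfPred_isMaximal_finite R).to_subtype
  let e := (IsArtinianRing.equivPi R).toRingEquiv.trans
    (RingEquiv.piCongrLeft (fun I : {I : Ideal R | I.IsMaximal} => R ⧸ I.1) (MaximalSpectrum.equivSubtype R))
  have hq : ∀ I : {I : Ideal R | I.IsMaximal}, Nonempty ((R ⧸ I.1) ≃+* ZMod p) := by
    intro I
    haveI : I.1.IsMaximal := I.2
    letI : Field (R ⧸ I.1) := Ideal.Quotient.field I.1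
    haveI : Finite (R ⧸ I.1) := Finite.of_surjective _ Ideal.Quotient.mk_surjective
    apply field_equiv_zmod hp
    · intro x
      obtain ⟨y, rfl⟩ := Ideal.Quotient.mk_surjective x
      rw [← map_pow, (h y).1]
    · have hp1 : ((p : ℕ) : R) = 0 := by
        have := (h 1).2
        simpa [nsmul_eq_mul] using this
      rw [← map_natCast (Ideal.Quotient.mk I.1), hp1, map_zero]
  let f := fun I => Classical.choice (hq I)
  let e2 := RingEquiv.piCongrRight f
  have hcard : Nat.card {I : Ideal R | I.IsMaximal} = Nat.card {I : Ideal R // I.IsMaximal} := rfl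
  let e3 : {I : Ideal R | I.IsMaximal} ≃ Fin (Nat.card {I : Ideal R // I.IsMaximal}) :=
    Finite.equivFinOfCardEq hcard
  exact ⟨(e.trans e2).trans (RingEquiv.piCongrLeft (fun _ => ZMod p) e3)⟩

theorem stmt_10 (p : ℕ) (hp : p.Prime) (R : Type*) [CommRing R] [Finite R] (n : ℕ) :
    (IsPRing p R ∧ Nat.card {I : Ideal R // I.IsMaximal} = n) ↔
      Nonempty (R ≃+* (Fin n → ZMod p)) := by
  have : Fact p.Prime := ⟨hp⟩
  constructor
  · rintro ⟨h1, h2⟩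
    obtain ⟨e⟩ := pring_equiv hp R h1
    exact ⟨h2 ▸ e⟩
  · rintro ⟨e⟩
    have hP : IsPRing p R := by
      intro x
      constructor
      · apply e.injective
        rw [map_pow]
        funext i
        exact ZMod.pow_card (e x i)
      · apply e.injective
        rw [map_nsmul, map_zero]
        funext i
        simp [nsmul_eq_mul, ZMod.natCast_self]
    refine ⟨hP, ?_⟩
    obtain ⟨e'⟩ := pring_equiv hp R hP
    have h1 : Nat.card R = p ^ Nat.card {I : Ideal R // I.IsMaximal} := by
      rw [Nat.card_eq_of_bijective e' e'.bijective, Nat.card_fun]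
      simp [Nat.card_eq_fintype_card]
    have h2 : Nat.card R = p ^ n := by
      rw [Nat.card_eq_of_bijective e e.bijective, Nat.card_fun]
      simp [Nat.card_eq_fintype_card]
    exact Nat.pow_right_injective hp.two_le (h1.symm.trans h2)
end

section
/- Let R be a semilocal p-ring with exactly n maximal ideals. Then R has exactly 2^n ideals, all of which are p-ideals. -/
lemma pring_jacobson_bot (p : ℕ) (hp : p.Prime) (R : Type*) [CommRing R]
    (hR : IsPRing p R) : Ideal.jacobson (⊥ : Ideal R) = ⊥ := by
  have hp2 := hp.two_le
  refine le_antisymm (fun x hx => ?_) bot_le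
  have h1 : x ^ (p - 1) ∈ Ideal.jacobson (⊥ : Ideal R) :=
    Ideal.pow_mem_of_mem _ hx _ (by omega)
  have hu : IsUnit (x ^ (p - 1) * (-1) + 1) := (Ideal.mem_jacobson_bot.1 h1) (-1)
  have hx0 : x * (x ^ (p - 1) * (-1) + 1) = 0 := by
    have hxp : x * x ^ (p - 1) = x ^ p := by
      rw [← pow_succ']
      congr 1
      omega
    have := (hR x).1
    ring_nf
    rw [hxp, this, sub_self]
  rw [Ideal.mem_bot]
  exact (hu.mul_left_eq_zero).1 hx0

lemma pring_quotient (p : ℕ) (R : Type*) [CommRing R] (hR : IsPRing p R)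
    (I : Ideal R) : IsPRing p (R ⧸ I) := by
  intro y
  obtain ⟨x, rfl⟩ := Ideal.Quotient.mk_surjective y
  constructor
  · rw [← map_pow, (hR x).1]
  · rw [← map_nsmul, (hR x).2, map_zero]

theorem stmt_13 (p : ℕ) (hp : p.Prime) (R : Type*) [CommRing R]
    (hR : IsPRing p R) (n : ℕ)
    (hn : Nat.card {I : Ideal R // I.IsMaximal} = n)
    (hfin : Finite {I : Ideal R // I.IsMaximal}) :
    Nat.card (Ideal R) = 2 ^ n ∧ ∀ I : Ideal R, IsPIdeal p I := by
  classical
  refine ⟨?_, fun I x _ => hR x⟩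
  have jac : ∀ I : Ideal R, I.jacobson = I := fun I => by
    rw [Ideal.jacobson_eq_iff_jacobson_quotient_eq_bot]
    exact pring_jacobson_bot p hp _ (pring_quotient p R hR I)
  let e : Ideal R ≃ Set {I : Ideal R // I.IsMaximal} :=
    { toFun := fun I => {m | I ≤ m.1}
      invFun := fun S => sInf (Subtype.val '' S)
      left_inv := by
        intro I
        have himg : Subtype.val '' {m : {I : Ideal R // I.IsMaximal} | I ≤ m.1}
            = {J : Ideal R | I ≤ J ∧ J.IsMaximal} := by
          ext J
          constructor
          · rintro ⟨m, hm, rfl⟩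
            exact ⟨hm, m.2⟩
          · rintro ⟨h1, h2⟩
            exact ⟨⟨J, h2⟩, h1, rfl⟩
        simp only [himg]
        exact jac I
      right_inv := by
        intro S
        ext m
        simp only [Set.mem_setOf_eq]
        constructor
        · intro hle
          have hfS : (Subtype.val '' S).Finite := (Set.toFinite S).image _
          rw [← hfS.coe_toFinset, ← Finset.inf_id_eq_sInf] at hle
          obtain ⟨J, hJ, hJle⟩ := (m.2.isPrime.inf_le').1 hle
          rw [Set.Finite.mem_toFinset] at hJ
          obtain ⟨m', hm', rfl⟩ := hJ
          have : m'.1 = m.1 := m'.2.eq_of_le m.2.ne_top hJle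
          rwa [show m' = m from Subtype.ext this] at hm'
        · intro hm
          exact sInf_le (Set.mem_image_of_mem _ hm) }
  haveI : Fintype {I : Ideal R // I.IsMaximal} := Fintype.ofFinite _
  rw [Nat.card_eq_of_bijective e e.bijective, Nat.card_eq_fintype_card,
    Fintype.card_set, ← hn, Nat.card_eq_fintype_card]
end

section
/- Let R be a finite p-ring with maximal ideals m_1, ..., m_n and f(x) ∈ R[x]. For each j, let f_j(x) denote the reduction of f modulo m_j in (R/m_j)[x]. Then R[x]/(f(x)) is a p-ring if and only if for each j, f_j(x) splits into distinct linear factors over R/m_j (i.e., f_j has deg f_j distinct roots in R/m_j). -/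
attribute [local instance] Ideal.Quotient.field

open Polynomial

private lemma charP_of_pring' {p : ℕ} (hp : p.Prime) {R : Type*} [CommRing R] [Nontrivial R]
    (h : (p : R) = 0) : CharP R p := by
  have h1 : ringChar R ∣ p := ringChar.dvd h
  rcases hp.eq_one_or_self_of_dvd _ h1 with h2 | h2
  · exact absurd h2 CharP.ringChar_ne_one
  · rw [← h2]; exact ringChar.charP R

private lemma isReduced_of_pring {p : ℕ} (hp : p.Prime) {R : Type*} [CommRing R]
    (hR : IsPRing p R) : IsReduced R := by
  constructor
  rintro x ⟨n, hn⟩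
  have key : ∀ k : ℕ, x ^ p ^ k = x := by
    intro k; induction k with
    | zero => simp
    | succ k ih => rw [pow_succ, pow_mul, ih]; exact (hR x).1
  rcases Nat.eq_zero_or_pos n with rfl | hn0
  · have h1 : (1 : R) = 0 := by simpa using hn
    calc x = x * 1 := (mul_one x).symm
    _ = 0 := by rw [h1, mul_zero]
  · have hlt : n ≤ p ^ n := (Nat.lt_pow_self (n := n) hp.one_lt).le
    calc x = x ^ p ^ n := (key n).symm
    _ = x ^ n * x ^ (p ^ n - n) := by rw [← pow_add, Nat.add_sub_cancel' hlt]
    _ = 0 := by rw [hn, zero_mul]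

private lemma field_key {p : ℕ} (hp : p.Prime) {K : Type*} [Field K] [Finite K]
    (hK1 : ∀ x : K, x ^ p = x) (hK2 : (p : K) = 0) (g : K[X]) :
    (Squarefree g ∧ g.Splits) ↔ g ∣ X ^ p - X := by
  cases nonempty_fintype K
  haveI : CharP K p := charP_of_pring' hp hK2
  have hdeg : (X ^ p - X : K[X]).natDegree = p :=
    FiniteField.X_pow_card_sub_X_natDegree_eq K hp.one_lt
  have hne : (X ^ p - X : K[X]) ≠ 0 :=
    fun h => hp.ne_zero (by rw [← hdeg, h, natDegree_zero])
  have hcard : Fintype.card K = p := by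
    have hle : Fintype.card K ≤ p := by
      have h1 : (Finset.univ.val : Multiset K) ≤ (X ^ p - X : K[X]).roots := by
        rw [Multiset.le_iff_subset Finset.univ.nodup]
        intro a _
        rw [mem_roots hne]
        simp [IsRoot, hK1 a]
      have := Multiset.card_le_card h1
      simpa [hdeg] using this.trans ((X ^ p - X : K[X]).card_roots')
    have hge : p ≤ Fintype.card K := by
      haveI := Fact.mk hp
      have : Function.Injective (ZMod.castHom (dvd_refl p) K) := ZMod.castHom_injective K
      simpa [ZMod.card] using Fintype.card_le_of_injective _ this
    omega
  have hroots : (X ^ p - X : K[X]).roots = Finset.univ.val := by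
    rw [← hcard]; exact FiniteField.roots_X_pow_card_sub_X K
  have hsplit : (X ^ p - X : K[X]).Splits := by
    rw [splits_iff_card_roots, hroots, hdeg]
    simpa using hcard
  have hsep : (X ^ p - X : K[X]).Separable := by
    have hder : derivative (X ^ p - X : K[X]) = -1 := by
      simp [derivative_X_pow, CharP.cast_eq_zero]
    rw [Separable, hder]
    exact ⟨0, -1, by ring⟩
  constructor
  · rintro ⟨hsf, hsp⟩
    have hg0 : g ≠ 0 := hsf.ne_zero
    have hnodup : g.roots.Nodup :=
      nodup_roots (PerfectField.separable_iff_squarefree.mpr hsf)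
    have hle : g.roots ≤ (X ^ p - X : K[X]).roots := by
      rw [hroots, Multiset.le_iff_subset hnodup]
      intro a _; exact Finset.mem_univ a
    have hdvd : (Multiset.map (fun a => X - C a) g.roots).prod ∣ X ^ p - X := by
      have hmono : (X ^ p - X : K[X]).Monic := by
        apply (monic_X_pow p).sub_of_left
        rw [degree_X_pow, degree_X]
        exact_mod_cast hp.one_lt
      calc (Multiset.map (fun a => X - C a) g.roots).prod
          ∣ (Multiset.map (fun a => X - C a) (X ^ p - X : K[X]).roots).prod :=
            Multiset.prod_dvd_prod_of_le (Multiset.map_le_map hle)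
        _ = X ^ p - X := prod_multiset_X_sub_C_of_monic_of_roots_card_eq hmono
            (by rw [hroots, hdeg]; simpa using hcard)
    have heq := hsp.eq_prod_roots
    rw [heq]
    exact ((isUnit_C.mpr (isUnit_iff_ne_zero.mpr (leadingCoeff_ne_zero.mpr hg0))).mul_left_dvd).mpr hdvd
  · intro h
    exact ⟨hsep.squarefree.squarefree_of_dvd h, hsplit.of_dvd hne h⟩

set_option synthInstance.maxHeartbeats 1000000 in
private lemma quot_pring_iff {p : ℕ} (hp : p.Prime) {R : Type*} [CommRing R]
    (hR : IsPRing p R) (f : R[X]) :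
    IsPRing p (R[X] ⧸ Ideal.span {f}) ↔ f ∣ (X ^ p - X : R[X]) := by
  have psmul : ∀ g : R[X], p • g = 0 := by
    intro g; ext n; rw [coeff_smul, coeff_zero]; exact (hR _).2
  constructor
  · intro h
    have h1 := (h (Ideal.Quotient.mk _ X)).1
    rw [← map_pow, ← sub_eq_zero, ← map_sub, Ideal.Quotient.eq_zero_iff_mem,
      Ideal.mem_span_singleton] at h1
    exact h1
  · intro h x
    obtain ⟨g, rfl⟩ := Ideal.Quotient.mk_surjective x
    refine ⟨?_, ?_⟩
    · rw [← map_pow, ← sub_eq_zero, ← map_sub, Ideal.Quotient.eq_zero_iff_mem,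
        Ideal.mem_span_singleton]
      rcases subsingleton_or_nontrivial R with hs | hn
      · have hz : g ^ p - g = 0 := Subsingleton.elim _ _
        rw [hz]; exact dvd_zero f
      · haveI : CharP R p := charP_of_pring' hp (by
          have := (hR 1).2
          simpa [nsmul_eq_mul] using this)
        haveI := Fact.mk hp
        have hfrob : ∀ q : R[X], q.map (frobenius R p) = q := by
          intro q; ext n; simp [coeff_map, frobenius_def, (hR _).1]
        have hgp : g ^ p = expand R p g := by
          rw [← map_frobenius_expand (p := p) (f := g), hfrob]
        have hdvd : (X ^ p - X : R[X]) ∣ g ^ p - g := by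
          rw [hgp]
          have := Polynomial.sub_dvd_eval_sub (X ^ p) X (g.map C)
          rwa [eval_map, eval_map, eval₂_C_X, ← coe_expand] at this
        exact dvd_trans h hdvd
    · rw [← map_nsmul, psmul, map_zero]

private lemma dvd_of_forall_max {R : Type*} [CommRing R] [Finite R] [IsReduced R] (a b : R[X])
    (h : ∀ (m : Ideal R) [m.IsMaximal],
      a.map (Ideal.Quotient.mk m) ∣ b.map (Ideal.Quotient.mk m)) : a ∣ b := by
  classical
  let e : R[X] ≃+* ∀ I : MaximalSpectrum R, (R ⧸ I.1)[X] :=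
    (Polynomial.mapEquiv (IsArtinianRing.equivPi R).toRingEquiv).trans (Polynomial.piEquiv _)
  have he : ∀ (x : R[X]) (I : MaximalSpectrum R),
      e x I = x.map (Ideal.Quotient.mk I.1) := by
    intro x I
    have h0 : e x I = (x.map (IsArtinianRing.equivPi R).toRingEquiv.toRingHom).map
        (Pi.evalRingHom (fun I : MaximalSpectrum R => R ⧸ I.1) I) := rfl
    rw [h0, map_map]
    congr 1
  have h2 : ∀ I : MaximalSpectrum R, e a I ∣ e b I := by
    intro I
    rw [he, he]
    haveI : I.1.IsMaximal := I.2
    exact h I.1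
  choose q hq using h2
  refine ⟨e.symm q, ?_⟩
  apply e.injective
  rw [map_mul, e.apply_symm_apply]
  funext I
  exact hq I

theorem stmt_14 (p : ℕ) (hp : p.Prime) (R : Type*) [CommRing R] [Finite R]
    (hR : IsPRing p R) (f : Polynomial R) :
    IsPRing p (Polynomial R ⧸ Ideal.span {f}) ↔
      ∀ (m : Ideal R) [m.IsMaximal],
        Squarefree (f.map (Ideal.Quotient.mk m)) ∧
          (f.map (Ideal.Quotient.mk m)).Splits := by
  haveI : IsReduced R := isReduced_of_pring hp hR
  rw [quot_pring_iff hp hR f]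
  have hfield : ∀ (m : Ideal R) [m.IsMaximal],
      (Squarefree (f.map (Ideal.Quotient.mk m)) ∧
        (f.map (Ideal.Quotient.mk m)).Splits) ↔
      f.map (Ideal.Quotient.mk m) ∣ X ^ p - X := by
    intro m hm
    haveI : Finite (R ⧸ m) := Finite.of_surjective _ Ideal.Quotient.mk_surjective
    refine field_key hp ?_ ?_ _
    · intro x
      obtain ⟨r, rfl⟩ := Ideal.Quotient.mk_surjective x
      rw [← map_pow, (hR r).1]
    · have hpR : (p : R) = 0 := by
        have := (hR 1).2
        simpa [nsmul_eq_mul] using this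
      rw [← map_natCast (Ideal.Quotient.mk m), hpR, map_zero]
  constructor
  · intro h m hm
    have hmap : f.map (Ideal.Quotient.mk m) ∣ (X ^ p - X : R[X]).map (Ideal.Quotient.mk m) :=
      Polynomial.map_dvd _ h
    rw [Polynomial.map_sub, Polynomial.map_pow, map_X] at hmap
    exact (hfield m).mpr hmap
  · intro h
    apply dvd_of_forall_max
    intro m hm
    rw [Polynomial.map_sub, Polynomial.map_pow, map_X]
    exact (hfield m).mp (h m)
end

section
/- Let A and B be commutative rings, J an ideal of B, and f : A → B a ring homomorphism. The amalgamation A ⋈^f J = {(a, f(a)+j) : a ∈ A, j ∈ J}, a subring of A × B, is a p-ring if and only if A is a p-ring and J is a p-ideal of B. -/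
/-- The amalgamation $A ⋈^f J$ as a subring of $A × B$. -/
def amalgamation {A B : Type*} [CommRing A] [CommRing B] (f : A →+* B)
    (J : Ideal B) : Subring (A × B) where
  carrier := {x | x.2 - f x.1 ∈ J}
  zero_mem' := by simp
  one_mem' := by simp
  add_mem' := by
    intro x y hx hy
    simp only [Set.mem_setOf_eq, Prod.fst_add, Prod.snd_add, map_add] at *
    have : x.2 + y.2 - (f x.1 + f y.1) = (x.2 - f x.1) + (y.2 - f y.1) := by ring
    rw [this]; exact J.add_mem hx hy
  neg_mem' := by
    intro x hx
    simp only [Set.mem_setOf_eq, Prod.fst_neg, Prod.snd_neg, map_neg] at *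
    have : -x.2 - -f x.1 = -(x.2 - f x.1) := by ring
    rw [this]; exact J.neg_mem hx
  mul_mem' := by
    intro x y hx hy
    simp only [Set.mem_setOf_eq, Prod.fst_mul, Prod.snd_mul, map_mul] at *
    have : x.2 * y.2 - f x.1 * f y.1 =
        (x.2 - f x.1) * y.2 + f x.1 * (y.2 - f y.1) := by ring
    rw [this]
    exact J.add_mem (J.mul_mem_right _ hx) (J.mul_mem_left _ hy)

theorem stmt_15 (p : ℕ) (hp : p.Prime) {A B : Type*} [CommRing A] [CommRing B]
    (f : A →+* B) (J : Ideal B) :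
    IsPRing p (amalgamation f J) ↔ IsPRing p A ∧ IsPIdeal p J := by
  constructor
  · intro h
    constructor
    · intro a
      have hmem : ((a, f a) : A × B) ∈ amalgamation f J := by
        show f a - f a ∈ J; simp
      obtain ⟨h1, h2⟩ := h ⟨(a, f a), hmem⟩
      have h1' : (((a, f a) : A × B)) ^ p = ((a, f a) : A × B) := by
        have := Subtype.ext_iff.mp h1
        simpa using this
      have h2' : (p : A) * a = 0 ∧ (p : B) * f a = 0 := by
        have := Subtype.ext_iff.mp h2
        simpa [Prod.ext_iff, Prod.fst_natCast, Prod.snd_natCast] using this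
      rw [Prod.ext_iff] at h1'
      exact ⟨h1'.1, by rw [nsmul_eq_mul]; exact h2'.1⟩
    · intro j hj
      have hmem : ((0, j) : A × B) ∈ amalgamation f J := by
        show j - f 0 ∈ J; simpa using hj
      obtain ⟨h1, h2⟩ := h ⟨(0, j), hmem⟩
      have h1' : (((0, j) : A × B)) ^ p = ((0, j) : A × B) := by
        have := Subtype.ext_iff.mp h1
        simpa using this
      have h2' : (p : B) * j = 0 := by
        have := Subtype.ext_iff.mp h2
        simpa [Prod.ext_iff, Prod.fst_natCast, Prod.snd_natCast] using this
      rw [Prod.ext_iff] at h1'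
      exact ⟨h1'.2, by rw [nsmul_eq_mul]; exact h2'⟩
  · rintro ⟨hA, hJ⟩ ⟨⟨a, b⟩, hab⟩
    have hj : b - f a ∈ J := hab
    set j : B := b - f a with hjdef
    have hb : b = f a + j := by rw [hjdef]; ring
    have hja : a ^ p = a := (hA a).1
    have hpa : p • a = 0 := (hA a).2
    have hjp : j ^ p = j := (hJ j hj).1
    have hpj : p • j = 0 := (hJ j hj).2
    have hbp : b ^ p = b := by
      rw [hb, add_pow_prime_eq hp]
      have hsum : (∑ k ∈ Finset.Ioo 0 p, f a ^ k * j ^ (p - k) * ↑(p.choose k / p)) ∈ J := by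
        apply Ideal.sum_mem
        intro k hk
        rw [Finset.mem_Ioo] at hk
        have hpk : j ^ (p - k) ∈ J :=
          Ideal.pow_mem_of_mem J hj _ (by omega)
        exact Ideal.mul_mem_right _ _ (Ideal.mul_mem_left _ _ hpk)
      have hz : (p : B) * (∑ k ∈ Finset.Ioo 0 p, f a ^ k * j ^ (p - k) * ↑(p.choose k / p)) = 0 := by
        rw [← nsmul_eq_mul]
        exact (hJ _ hsum).2
      rw [show (p : B) * f a * j = 0 by rw [mul_comm (p : B) (f a), mul_assoc, ← nsmul_eq_mul, hpj, mul_zero], zero_mul, add_zero, ← map_pow, hja, hjp]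
    have hpb : p • b = 0 := by
      rw [hb, smul_add, hpj, add_zero, ← map_nsmul, hpa, map_zero]
    constructor
    · apply Subtype.ext
      rw [SubmonoidClass.coe_pow]
      exact Prod.ext (by simpa using hja) (by simpa using hbp)
    · apply Subtype.ext
      push_cast
      exact Prod.ext (by simpa using hpa) (by simpa using hpb)
end

section
/- Let A be a commutative ring and I an ideal of A. The amalgamated duplication A ⋈ I = {(a, a+i) : a ∈ A, i ∈ I}, a subring of A × A, is a p-ring if and only if A is a p-ring. -/
/-- The amalgamated duplication $A ⋈ I$ as a subring of $A × A$. -/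
def amalgDuplication {A : Type*} [CommRing A] (I : Ideal A) : Subring (A × A) where
  carrier := {x | x.2 - x.1 ∈ I}
  zero_mem' := by simp
  one_mem' := by simp
  add_mem' := by
    intro x y hx hy
    simp only [Set.mem_setOf_eq, Prod.fst_add, Prod.snd_add] at *
    have : x.2 + y.2 - (x.1 + y.1) = (x.2 - x.1) + (y.2 - y.1) := by ring
    rw [this]; exact I.add_mem hx hy
  neg_mem' := by
    intro x hx
    simp only [Set.mem_setOf_eq, Prod.fst_neg, Prod.snd_neg] at *
    have : -x.2 - -x.1 = -(x.2 - x.1) := by ring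
    rw [this]; exact I.neg_mem hx
  mul_mem' := by
    intro x y hx hy
    simp only [Set.mem_setOf_eq, Prod.fst_mul, Prod.snd_mul] at *
    have : x.2 * y.2 - x.1 * y.1 = (x.2 - x.1) * y.2 + x.1 * (y.2 - y.1) := by ring
    rw [this]
    exact I.add_mem (I.mul_mem_right _ hx) (I.mul_mem_left _ hy)

theorem stmt_16 (p : ℕ) (hp : p.Prime) {A : Type*} [CommRing A] (I : Ideal A) :
    IsPRing p (amalgDuplication I) ↔ IsPRing p A := by
  constructor
  · intro h a
    have ha : ((a, a) : A × A) ∈ amalgDuplication I := by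
      show a - a ∈ I; simp
    obtain ⟨h1, h2⟩ := h ⟨(a, a), ha⟩
    constructor
    · have := congrArg Prod.fst (congrArg Subtype.val h1)
      simpa using this
    · have := congrArg Prod.fst (congrArg Subtype.val h2)
      simpa using this
  · intro h x
    constructor
    · ext : 1
      show (x : A × A) ^ p = (x : A × A)
      ext
      · exact (h (x : A × A).1).1
      · exact (h (x : A × A).2).1
    · ext : 1
      show p • (x : A × A) = 0
      ext
      · exact (h (x : A × A).1).2
      · exact (h (x : A × A).2).2
end

section
/- Let A be a commutative ring and E an A-module. The trivial ring extension A ⋉ E (with multiplication (a,e)(b,f) = (ab, af + be)) is a von Neumann regular ring if and only if A is von Neumann regular and E = 0. -/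
theorem stmt_17 (A : Type*) (E : Type*) [CommRing A] [AddCommGroup E]
    [Module A E] [Module Aᵐᵒᵖ E] [IsCentralScalar A E] :
    (∀ x : TrivSqZeroExt A E, ∃ y, x = x ^ 2 * y) ↔
      ((∀ a : A, ∃ b, a = a ^ 2 * b) ∧ ∀ e : E, e = 0) := by
  constructor
  · intro h
    constructor
    · intro a
      obtain ⟨y, hy⟩ := h (TrivSqZeroExt.inl a)
      refine ⟨y.fst, ?_⟩
      have := congrArg TrivSqZeroExt.fst hy
      simpa using this
    · intro e
      obtain ⟨y, hy⟩ := h (TrivSqZeroExt.inr e)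
      have h2 : (TrivSqZeroExt.inr e : TrivSqZeroExt A E) ^ 2 = 0 := by
        rw [sq]
        simp [TrivSqZeroExt.inr_mul_inr]
      rw [h2, zero_mul] at hy
      have := congrArg TrivSqZeroExt.snd hy
      simpa using this
  · rintro ⟨hA, hE⟩ x
    obtain ⟨b, hb⟩ := hA x.fst
    refine ⟨TrivSqZeroExt.inl b, ?_⟩
    ext
    · simpa using hb
    · simp [hE]
end
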